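/- Let σ be a permutation of length k whose first two entries are not consecutive integers. Then for every n > k, every permutation of length n has strictly fewer than C_{n−k+2} preimages under s_{σ}. -/

import Mathlib

open List

attribute [local instance] Classical.propDecidable

/-- `u` is order-isomorphic to `v`. -/
def OrdIso (u v : List ℕ) : Prop :=
  u.length = v.length ∧
    ∀ i j, i < u.length → j < u.length →
      (u.getD i 0 < u.getD j 0 ↔ v.getD i 0 < v.getD j 0)

/-- The word `w` contains the pattern `p`. -/
def Contains (w p : List ℕ) : Prop :=
  ∃ u, u.Sublist w ∧ OrdIso u p

/-- The word `w` avoids every pattern in `T`. -/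
def AvoidsSet (T : Set (List ℕ)) (w : List ℕ) : Prop :=
  ∀ p ∈ T, ¬ Contains w p

/-- One step of the `T`-avoiding stack machine: state is (input, stack, output);
the stack is read top to bottom (head is the top). -/
noncomputable def sTaux (T : Set (List ℕ)) : List ℕ → List ℕ → List ℕ → List ℕ
  | [], stack, out => out ++ stack
  | x :: rest, stack, out =>
    if AvoidsSet T (x :: stack) then sTaux T rest (x :: stack) out
    else
      match stack with
      | [] => sTaux T rest [x] out
      | y :: s => sTaux T (x :: rest) s (out ++ [y])
termination_by input stack _ => 2 * input.length + stack.length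
decreasing_by all_goals first | (simp_wf; omega) | omega | simp_wf

/-- The stack-sorting map `s_T`. -/
noncomputable def sT (T : Set (List ℕ)) (w : List ℕ) : List ℕ := sTaux T w [] []

/-- `w` is a permutation of `{1, …, w.length}`. -/
def IsPermList (w : List ℕ) : Prop := w.Perm (List.range' 1 w.length)

/-- `T` is reduced: no element of `T` contains another element of `T`. -/
def Reduced (T : Set (List ℕ)) : Prop :=
  ∀ σ ∈ T, ∀ τ ∈ T, σ ≠ τ → ¬ Contains σ τ

/-- `σ̂`: swap the first two entries of `σ`. -/
def hat : List ℕ → List ℕ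
  | a :: b :: t => b :: a :: t
  | l => l

/-!
Record, for every entry of the input `w`, how many pops immediately precede its push. Together
with the output `s_σ(w)` these pop counts determine `w`. A pop needs a stack of size at least
`k - 1`, so the first `k - 1` counts vanish and the remaining `n - k + 1` counts form a ballot
sequence (every prefix of length `j` sums to at most `j`); ballot sequences of length `m` embed
into the Dyck paths of semilength `m + 1`. The ballot sequence `1, 1, 0, …, 0` never occurs: it
would make both `a y s` and `b a s` order-isomorphic to `σ`, so the first two entries of `σ`
would compare alike with all later entries and hence be consecutive integers.
-/

section Ballot

open DyckStep

def IsBallot (d : List ℕ) : Prop := ∀ j, (d.take j).sum ≤ j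

def ballots (m : ℕ) : Set (List ℕ) := {d | IsBallot d ∧ d.length = m}

def blocks (d : List ℕ) : List DyckStep := d.flatMap fun t => U :: replicate t D

@[simp] lemma blocks_nil : blocks [] = [] := rfl

@[simp] lemma blocks_cons (t : ℕ) (d : List ℕ) :
    blocks (t :: d) = U :: (replicate t D ++ blocks d) := rfl

lemma blocks_append (d e : List ℕ) : blocks (d ++ e) = blocks d ++ blocks e :=
  flatMap_append

lemma count_U_blocks (d : List ℕ) : (blocks d).count U = d.length := by
  induction d with
  | nil => rfl
  | cons t d ih => simp [count_replicate, ih]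

lemma count_D_blocks (d : List ℕ) : (blocks d).count D = d.sum := by
  induction d with
  | nil => rfl
  | cons t d ih => simp [ih]

lemma head?_blocks_ne (d : List ℕ) : (blocks d).head? ≠ some D := by
  cases d <;> simp

lemma replicate_D_append_inj {a b : ℕ} {X Y : List DyckStep} (hX : X.head? ≠ some D)
    (hY : Y.head? ≠ some D) (h : replicate a D ++ X = replicate b D ++ Y) : a = b ∧ X = Y := by
  induction a generalizing b with
  | zero =>
    cases b with
    | zero => simpa using h
    | succ b => subst h; simp [replicate_succ] at hX
  | succ a ih =>
    cases b with
    | zero => subst h; simp [replicate_succ] at hY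
    | succ b =>
      simp only [replicate_succ, cons_append, cons.injEq, true_and] at h
      exact (ih h).imp_left (congrArg (· + 1))

lemma blocks_injective : Function.Injective blocks := by
  intro d e h
  induction d generalizing e with
  | nil => cases e <;> simp_all
  | cons t d ih =>
    cases e with
    | nil => simp at h
    | cons s e =>
      simp only [blocks_cons, cons.injEq, true_and] at h
      obtain ⟨rfl, hde⟩ := replicate_D_append_inj (head?_blocks_ne d) (head?_blocks_ne e) h
      rw [ih hde]

/-- The lattice path `L`, started at height `c`, never goes below `0`. -/
def StaysNonneg (c : ℕ) (L : List DyckStep) : Prop :=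
  ∀ i, (L.take i).count D ≤ (L.take i).count U + c

lemma StaysNonneg.cons_U {c : ℕ} {L : List DyckStep} (h : StaysNonneg (c + 1) L) :
    StaysNonneg c (U :: L) := by
  rintro (_ | i)
  · simp
  · have := h i
    simp only [take_succ_cons, count_cons_self, count_cons_of_ne (by decide : U ≠ D)]
    omega

lemma StaysNonneg.replicate_D_append {c t : ℕ} {L : List DyckStep} (h : StaysNonneg c L) :
    StaysNonneg (c + t) (replicate t D ++ L) := by
  induction t with
  | zero => simpa using h
  | succ t ih =>
    rintro (_ | i)
    · simp
    · have := ih i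
      simp only [replicate_succ, cons_append, take_succ_cons, count_cons_self,
        count_cons_of_ne (by decide : D ≠ U)]
      omega

lemma staysNonneg_blocks_append {c : ℕ} {d : List ℕ} {X : List DyckStep}
    (hd : ∀ j, (d.take j).sum ≤ j + c) (hX : StaysNonneg (c + d.length - d.sum) X) :
    StaysNonneg c (blocks d ++ X) := by
  induction d generalizing c with
  | nil => simpa using hX
  | cons t d ih =>
    have ht : t ≤ c + 1 := by simpa [add_comm] using hd 1
    have hrest : StaysNonneg (c + 1 - t) (blocks d ++ X) := by
      refine ih (fun j => ?_) ?_
      · have := hd (j + 1)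
        simp only [take_succ_cons, sum_cons] at this
        omega
      · rwa [show c + 1 - t + d.length - d.sum = c + (t :: d).length - (t :: d).sum by
          simp only [length_cons, sum_cons]; omega]
    have := hrest.replicate_D_append (t := t)
    rw [Nat.sub_add_cancel ht] at this
    simpa using this.cons_U

lemma IsBallot.sum_le_length {d : List ℕ} (hd : IsBallot d) : d.sum ≤ d.length := by
  simpa using hd d.length

/-- A ballot sequence `d`, completed by the entry that makes its total `d.length + 1`, read as
the Dyck path `U D^{d₀} U D^{d₁} ⋯`. -/
def IsBallot.toDyckWord {d : List ℕ} (hd : IsBallot d) : DyckWord where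
  toList := blocks (d ++ [d.length + 1 - d.sum])
  count_U_eq_count_D := by
    have := hd.sum_le_length
    simp [count_U_blocks, count_D_blocks]
    omega
  count_D_le_count_U := by
    have hlast : StaysNonneg (d.length - d.sum) (blocks [d.length + 1 - d.sum]) := by
      have := (show StaysNonneg 0 [] by simp [StaysNonneg]).replicate_D_append
        (t := d.length - d.sum + 1)
      rw [Nat.sub_add_comm hd.sum_le_length]
      simpa using this.cons_U
    rw [blocks_append]
    simpa [StaysNonneg] using staysNonneg_blocks_append (c := 0) hd (by simpa using hlast)

lemma IsBallot.semilength_toDyckWord {d : List ℕ} (hd : IsBallot d) :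
    hd.toDyckWord.semilength = d.length + 1 := by
  simp [DyckWord.semilength, IsBallot.toDyckWord, count_U_blocks]

lemma IsBallot.toDyckWord_inj {d e : List ℕ} (hd : IsBallot d) (he : IsBallot e)
    (h : hd.toDyckWord = he.toDyckWord) : d = e :=
  append_inj_left' (blocks_injective (congrArg DyckWord.toList h)) rfl

lemma ncard_ballots_le_catalan (m : ℕ) :
    (ballots m).Finite ∧ (ballots m).ncard ≤ catalan (m + 1) := by
  let f : ballots m → {p : DyckWord // p.semilength = m + 1} := fun d =>
    ⟨d.2.1.toDyckWord, by rw [IsBallot.semilength_toDyckWord, d.2.2]⟩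
  have hf : Function.Injective f := fun d e h =>
    Subtype.ext (IsBallot.toDyckWord_inj d.2.1 e.2.1 (congrArg Subtype.val h))
  refine ⟨Set.finite_coe_iff.mp (Finite.of_injective f hf), ?_⟩
  rw [← Nat.card_coe_set_eq, ← DyckWord.card_dyckWord_semilength_eq_catalan,
    ← Nat.card_eq_fintype_card]
  exact Nat.card_le_card_of_injective f hf

end Ballot

lemma Contains.length_le {u p : List ℕ} (h : Contains u p) : p.length ≤ u.length := by
  obtain ⟨v, hv, hlen, -⟩ := h
  exact hlen ▸ hv.length_le

lemma Contains.ordIso_of_length_eq {u p : List ℕ} (h : Contains u p)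
    (hlen : u.length = p.length) : OrdIso u p := by
  obtain ⟨v, hv, hiso⟩ := h
  rwa [hv.eq_of_length (hiso.1.trans hlen.symm)] at hiso

lemma avoidsSet_singleton_iff {σ u : List ℕ} : AvoidsSet {σ} u ↔ ¬ Contains u σ := by
  simp [AvoidsSet]

lemma avoidsSet_singleton_of_length_lt {σ u : List ℕ} (h : u.length < σ.length) :
    AvoidsSet {σ} u :=
  avoidsSet_singleton_iff.mpr fun hc => (hc.length_le.trans_lt h).false

lemma IsPermList.adjacent_of_forall_lt_iff {σ : List ℕ} (hσ : IsPermList σ)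
    (h2 : 2 ≤ σ.length)
    (h : ∀ j, 2 ≤ j → j < σ.length →
      (σ.getD 0 0 < σ.getD j 0 ↔ σ.getD 1 0 < σ.getD j 0)) :
    σ.getD 0 0 + 1 = σ.getD 1 0 ∨ σ.getD 1 0 + 1 = σ.getD 0 0 := by
  obtain ⟨a, b, t, rfl⟩ : ∃ a b t, σ = a :: b :: t := by
    match σ, h2 with
    | a :: b :: t, _ => exact ⟨a, b, t, rfl⟩
  have hmem : ∀ v, v ∈ a :: b :: t ↔ 1 ≤ v ∧ v < 1 + (t.length + 2) := fun v => by
    rw [hσ.mem_iff, mem_range'_1, length_cons, length_cons]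
  have hnd : (a :: b :: t).Nodup := hσ.nodup_iff.mpr nodup_range'
  simp only [getD_cons_zero, getD_cons_succ] at h ⊢
  by_contra hne
  -- a value strictly between `a` and `b` sits at some position `j + 2`
  obtain ⟨v, hv⟩ : ∃ v, a < v ∧ v < b ∨ b < v ∧ v < a := by
    have : a ≠ b := fun hab => by simp [hab] at hnd
    exact ⟨min a b + 1, by omega⟩
  have ha := (hmem a).mp (by simp)
  have hb := (hmem b).mp (by simp)
  have hvt : v ∈ t := by
    have := (hmem v).mpr (by omega)
    simp only [mem_cons] at this
    exact (this.resolve_left (by omega)).resolve_left (by omega)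
  obtain ⟨j, hj, rfl⟩ := getElem_of_mem hvt
  have := h (j + 2) (by omega) (by simp; omega)
  simp only [getD_cons_succ, getD_eq_getElem _ _ hj] at this
  omega

/-- Entry `i` of `popCounts T inp st` is the number of pops the `T`-machine, started with stack
`st`, performs immediately before pushing `inp[i]`. -/
noncomputable def popCounts (T : Set (List ℕ)) : List ℕ → List ℕ → List ℕ
  | [], _ => []
  | x :: rest, stack =>
    if AvoidsSet T (x :: stack) then 0 :: popCounts T rest (x :: stack)
    else
      match stack with
      | [] => 0 :: popCounts T rest [x]
      | _ :: s => (popCounts T (x :: rest) s).modifyHead (· + 1)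
termination_by input stack => 2 * input.length + stack.length
decreasing_by all_goals first | (simp_wf; omega) | omega | simp_wf

/-- The output of the stack machine started with stack `st` that pushes `inp` in order, popping
`d[i]` entries before pushing `inp[i]`. The cases where `d` runs out or a pop meets an empty stack
never arise from `popCounts`; their values are chosen to keep `replay` injective. -/
def replay : List ℕ → List ℕ → List ℕ → List ℕ
  | st, [], _ => st
  | st, x :: inp, [] => (x :: inp) ++ st
  | st, x :: inp, 0 :: ds => replay (x :: st) inp ds
  | [], x :: inp, (_ + 1) :: _ => x :: inp
  | y :: st, x :: inp, (e + 1) :: ds => y :: replay st (x :: inp) (e :: ds)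
termination_by st inp _ => 2 * inp.length + st.length

section PopCounts

variable {T : Set (List ℕ)} {x y : ℕ} {inp st s : List ℕ}

lemma popCounts_of_avoidsSet (h : AvoidsSet T (x :: st)) :
    popCounts T (x :: inp) st = 0 :: popCounts T inp (x :: st) := by
  rw [popCounts.eq_def]
  simp only [if_pos h]

lemma popCounts_of_not_avoidsSet (h : ¬ AvoidsSet T (x :: y :: s)) :
    popCounts T (x :: inp) (y :: s) = (popCounts T (x :: inp) s).modifyHead (· + 1) := by
  rw [popCounts.eq_def]
  simp only [if_neg h]

variable (T) in
lemma length_popCounts (inp st : List ℕ) : (popCounts T inp st).length = inp.length := by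
  induction inp, st using popCounts.induct T with
  | case1 => simp [popCounts]
  | case2 x rest st h ih => simp [popCounts_of_avoidsSet h, ih]
  | case3 x rest h ih => simp [popCounts, h, ih]
  | case4 x rest y s h ih => simp [popCounts_of_not_avoidsSet h, ih]

lemma sTaux_eq_append_replay (out : List ℕ) :
    sTaux T inp st out = out ++ replay st inp (popCounts T inp st) := by
  induction inp, st, out using sTaux.induct T with
  | case1 st out => rw [sTaux.eq_def, popCounts.eq_def, replay]
  | case2 x rest st out h ih =>
    rw [sTaux.eq_def]
    simp only [if_pos h]
    rw [ih, popCounts_of_avoidsSet h, replay]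
  | case3 x rest out h ih =>
    rw [sTaux.eq_def, popCounts.eq_def]
    simp only [if_neg h]
    rw [ih, replay]
  | case4 x rest out y s h ih =>
    obtain ⟨c, cs, hc⟩ := exists_cons_of_length_eq_add_one (length_popCounts T (x :: rest) s)
    rw [sTaux.eq_def]
    simp only [if_neg h]
    rw [ih, popCounts_of_not_avoidsSet h, hc, modifyHead_cons, replay]
    simp

lemma sT_eq_replay (w : List ℕ) : sT T w = replay [] w (popCounts T w []) := by
  rw [sT, sTaux_eq_append_replay, nil_append]

end PopCounts

lemma replay_inj {st₁ st₂ inp₁ inp₂ d : List ℕ} (hst : st₁.length = st₂.length)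
    (hinp : inp₁.length = inp₂.length) (h : replay st₁ inp₁ d = replay st₂ inp₂ d) :
    inp₁ = inp₂ ∧ st₁ = st₂ := by
  induction st₁, inp₁, d using replay.induct generalizing st₂ inp₂ with
  | case1 st d =>
    obtain rfl := length_eq_zero_iff.mp hinp.symm
    simpa [replay] using h
  | case2 st x inp =>
    obtain ⟨x₂, inp₂, rfl⟩ := exists_cons_of_length_eq_add_one hinp.symm
    rw [replay, replay] at h
    exact append_inj h hinp
  | case3 st x inp ds ih =>
    obtain ⟨x₂, inp₂, rfl⟩ := exists_cons_of_length_eq_add_one hinp.symm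
    rw [replay, replay] at h
    obtain ⟨rfl, hcons⟩ := ih (by simpa using hst) (by simpa using hinp) h
    obtain ⟨rfl, rfl⟩ := cons.inj hcons
    exact ⟨rfl, rfl⟩
  | case4 x inp e ds =>
    obtain rfl := length_eq_zero_iff.mp hst.symm
    obtain ⟨x₂, inp₂, rfl⟩ := exists_cons_of_length_eq_add_one hinp.symm
    simpa [replay] using h
  | case5 y st x inp e ds ih =>
    obtain ⟨y₂, st₂, rfl⟩ := exists_cons_of_length_eq_add_one hst.symm
    obtain ⟨x₂, inp₂, rfl⟩ := exists_cons_of_length_eq_add_one hinp.symm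
    rw [replay, replay, cons.injEq] at h
    obtain ⟨h', rfl⟩ := ih (by simpa using hst) hinp h.2
    exact ⟨h', by rw [h.1]⟩

lemma eq_of_sT_eq_of_popCounts_eq {T : Set (List ℕ)} {w₁ w₂ : List ℕ}
    (hlen : w₁.length = w₂.length) (hpop : popCounts T w₁ [] = popCounts T w₂ [])
    (h : sT T w₁ = sT T w₂) : w₁ = w₂ := by
  rw [sT_eq_replay, sT_eq_replay, hpop] at h
  exact (replay_inj rfl hlen h).1

section SingletonPattern

variable {σ : List ℕ}

lemma sum_take_popCounts_le (inp st : List ℕ) (i : ℕ) :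
    ((popCounts {σ} inp st).take i).sum ≤ st.length + i - (σ.length - 1) := by
  induction inp, st using popCounts.induct {σ} generalizing i with
  | case1 => simp [popCounts]
  | case2 x rest st h ih =>
    rw [popCounts_of_avoidsSet h]
    cases i with
    | zero => simp
    | succ i => simpa [Nat.add_assoc, Nat.add_comm 1] using ih i
  | case3 x rest h ih =>
    rw [popCounts.eq_def]
    simp only [if_neg h]
    cases i with
    | zero => simp
    | succ i => simpa [Nat.add_comm 1] using ih i
  | case4 x rest y s h ih =>
    -- a pop needs `x :: y :: s` to contain `σ`
    have hlen := (avoidsSet_singleton_iff.not_left.mp h).length_le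
    obtain ⟨c, cs, hc⟩ := exists_cons_of_length_eq_add_one (length_popCounts {σ} (x :: rest) s)
    have := hc ▸ ih i
    rw [popCounts_of_not_avoidsSet h, hc, modifyHead_cons]
    cases i with
    | zero => simp
    | succ i =>
      simp only [take_succ_cons, sum_cons, length_cons] at this hlen ⊢
      omega

lemma popCounts_eq_replicate_append {j : ℕ} {inp st : List ℕ} (hj : j ≤ inp.length)
    (hst : st.length + j < σ.length) :
    popCounts {σ} inp st =
      replicate j 0 ++ popCounts {σ} (inp.drop j) ((inp.take j).reverse ++ st) := by
  induction j generalizing inp st with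
  | zero => simp
  | succ j ih =>
    obtain ⟨x, rest, rfl⟩ := exists_cons_of_length_pos (by omega : 0 < inp.length)
    rw [popCounts_of_avoidsSet (avoidsSet_singleton_of_length_lt (by simp; omega)),
      ih (by simpa using hj) (by simp; omega)]
    simp [replicate_succ]

lemma isBallot_popCounts {inp st : List ℕ} (hst : st.length + 1 = σ.length) :
    IsBallot (popCounts {σ} inp st) := fun j => by
  have := sum_take_popCounts_le (σ := σ) inp st j
  omega

lemma popCounts_ne_one_one (hσ : IsPermList σ) (hσ2 : 2 ≤ σ.length)
    (hcons : σ.getD 0 0 + 1 ≠ σ.getD 1 0 ∧ σ.getD 1 0 + 1 ≠ σ.getD 0 0)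
    {inp st : List ℕ} (hinp : 2 ≤ inp.length) (hst : st.length + 1 = σ.length) (l : List ℕ) :
    popCounts {σ} inp st ≠ 1 :: 1 :: l := by
  obtain ⟨a, b, rest, rfl⟩ : ∃ a b rest, inp = a :: b :: rest := by
    match inp, hinp with
    | a :: b :: rest, _ => exact ⟨a, b, rest, rfl⟩
  obtain ⟨y, s, rfl⟩ := exists_cons_of_length_pos (by omega : 0 < st.length)
  intro h
  have h₁ : ¬ AvoidsSet {σ} (a :: y :: s) := fun hav => by
    simp [popCounts_of_avoidsSet hav] at h
  rw [popCounts_of_not_avoidsSet h₁,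
    popCounts_of_avoidsSet (avoidsSet_singleton_of_length_lt (by simp at hst ⊢; omega)),
    modifyHead_cons, cons.injEq] at h
  have h₂ : ¬ AvoidsSet {σ} (b :: a :: s) := fun hav => by
    simp [popCounts_of_avoidsSet hav] at h
  -- `a y s` and `b a s` are both order-isomorphic to `σ`, so the first two entries of `σ` compare
  -- alike with every later entry
  have O₁ := (avoidsSet_singleton_iff.not_left.mp h₁).ordIso_of_length_eq
    (by simp at hst ⊢; omega)
  have O₂ := (avoidsSet_singleton_iff.not_left.mp h₂).ordIso_of_length_eq
    (by simp at hst ⊢; omega)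
  refine (hσ.adjacent_of_forall_lt_iff hσ2 fun j hj hjσ => ?_).elim hcons.1 hcons.2
  obtain ⟨j, rfl⟩ : ∃ i, j = i + 2 := ⟨j - 2, by omega⟩
  have e₁ := O₁.2 0 (j + 2) (by simp) (by rw [O₁.1]; exact hjσ)
  have e₂ := O₂.2 1 (j + 2) (by simp) (by rw [O₂.1]; exact hjσ)
  simp only [getD_cons_zero, getD_cons_succ] at e₁ e₂
  exact e₁.symm.trans e₂

end SingletonPattern

theorem stmt11_general (σ : List ℕ) (k : ℕ) (hσ : IsPermList σ) (hk : σ.length = k)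
    (h2 : 2 ≤ k)
    (hcons : σ.getD 0 0 + 1 ≠ σ.getD 1 0 ∧ σ.getD 1 0 + 1 ≠ σ.getD 0 0)
    (n : ℕ) (hn : k < n) (π : List ℕ) :
    {w : List ℕ | IsPermList w ∧ w.length = n ∧ sT {σ} w = π}.ncard
      < catalan (n - k + 2) := by
  subst hk
  set P := {w : List ℕ | IsPermList w ∧ w.length = n ∧ sT {σ} w = π}
  -- the first `σ.length - 1` entries are always pushed; only the pops after them carry information
  let tail : List ℕ → List ℕ := fun w =>
    popCounts {σ} (w.drop (σ.length - 1)) (w.take (σ.length - 1)).reverse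
  have hsplit : ∀ w ∈ P, popCounts {σ} w [] = replicate (σ.length - 1) 0 ++ tail w :=
    fun w hw => by
      simpa using popCounts_eq_replicate_append (inp := w) (st := []) (by rw [hw.2.1]; omega)
        (by rw [length_nil]; omega)
  let bad := 1 :: 1 :: replicate (n - σ.length - 1) 0
  have hbad : bad ∈ ballots (n - σ.length + 1) := by
    refine ⟨fun j => ?_, by simp [bad]; omega⟩
    rcases j with _ | _ | j <;> simp [bad]
  have hmaps : Set.MapsTo tail P (ballots (n - σ.length + 1) \ {bad}) := by
    rintro w ⟨-, hw, -⟩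
    refine ⟨⟨isBallot_popCounts (by simp; omega), ?_⟩, popCounts_ne_one_one hσ h2 hcons
      (by simp; omega) (by simp; omega) _⟩
    simp [tail, length_popCounts]
    omega
  have hinj : Set.InjOn tail P := fun w₁ hw₁ w₂ hw₂ h =>
    eq_of_sT_eq_of_popCounts_eq (hw₁.2.1.trans hw₂.2.1.symm)
      (by rw [hsplit w₁ hw₁, hsplit w₂ hw₂, h]) (hw₁.2.2.trans hw₂.2.2.symm)
  obtain ⟨hfin, hcard⟩ := ncard_ballots_le_catalan (n - σ.length + 1)
  calc P.ncard ≤ (ballots (n - σ.length + 1) \ {bad}).ncard :=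
        Set.ncard_le_ncard_of_injOn tail hmaps hinj hfin.sdiff
    _ < (ballots (n - σ.length + 1)).ncard := Set.ncard_sdiff_singleton_lt_of_mem hbad hfin
    _ ≤ catalan (n - σ.length + 2) := hcard

/-- If the first two entries of `σ` (of length `k`) are not consecutive integers, then
for every `n > k` every permutation of length `n` has strictly fewer than `C_{n-k+2}`
preimages under `s_{σ}`. -/
theorem stmt11 (σ : List ℕ) (k : ℕ) (hσ : IsPermList σ) (hk : σ.length = k)
    (h2 : 2 ≤ k)
    (hcons : σ.getD 0 0 + 1 ≠ σ.getD 1 0 ∧ σ.getD 1 0 + 1 ≠ σ.getD 0 0)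
    (n : ℕ) (hn : k < n) (π : List ℕ) (hπ : IsPermList π) (hlen : π.length = n) :
    {w : List ℕ | IsPermList w ∧ w.length = n ∧ sT {σ} w = π}.ncard
      < catalan (n - k + 2) :=
  stmt11_general σ k hσ hk h2 hcons n hn π
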